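/- Let μ, μ₁ be probability measures on ℝ such that μ^{*n} = μ₁^{*n} on [0,∞) for all n ≥ 1, and let g be a probability density on [0,∞). Define h(x) = ∫_ℝ g(y−x) μ(dy) and h₁(x) = ∫_ℝ g(y−x) μ₁(dy), and let μ̄, μ̄₁ be the absolutely continuous measures with densities h, h₁. Then μ̄^{*n} = μ̄₁^{*n} on [0,∞) for all n ≥ 1. -/

import Mathlib

/-!
Let `ν` be the measure with density `x ↦ g (-x)`. Then `μ̄ = μ ∗ ν` and `μ̄₁ = μ₁ ∗ ν`, hence
`μ̄^{*n} = μ^{*n} ∗ ν^{*n}` and `μ̄₁^{*n} = μ₁^{*n} ∗ ν^{*n}`. Since `ν^{*n}` lives on `(-∞, 0]`,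
the mass `μ^{*n} ∗ ν^{*n}` gives to `s ⊆ [0, ∞)` is an average of `μ^{*n}(s - b)` over `b ≤ 0`,
and every such translate `s - b` lies in `[0, ∞)`, where `μ^{*n}` and `μ₁^{*n}` agree.
-/

open MeasureTheory Set

/-- The `n`-fold convolution power of a measure on `ℝ`, with `μ^{*0} = δ₀`. -/
noncomputable def convPow (μ : Measure ℝ) : ℕ → Measure ℝ
  | 0 => Measure.dirac 0
  | n + 1 => (convPow μ n).conv μ

namespace MeasureTheory.Measure

variable {G : Type*} [AddCommGroup G] [MeasurableSpace G] [MeasurableAdd₂ G]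

theorem conv_apply (μ ν : Measure G) [SFinite ν] {s : Set G} (hs : MeasurableSet s) :
    (μ ∗ ν) s = ∫⁻ x, ν ((x + ·) ⁻¹' s) ∂μ := by
  rw [conv, map_apply measurable_add hs, prod_apply (hs.preimage measurable_add)]
  rfl

theorem withDensity_lintegral_sub_eq_conv [MeasurableNeg G] (μ : Measure G) [SFinite μ]
    [μ.IsAddLeftInvariant] (ρ : Measure G) [SFinite ρ] {f : G → ENNReal}
    (hf : Measurable f) :
    μ.withDensity (fun x => ∫⁻ y, f (y - x) ∂ρ) = ρ ∗ μ.withDensity (fun x => f (-x)) := by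
  ext s hs
  have hshift (y : G) :
      μ.withDensity (fun x => f (-x)) ((y + ·) ⁻¹' s) = ∫⁻ x in s, f (y - x) ∂μ := by
    rw [withDensity_apply _ (hs.preimage (measurable_const_add y)),
      ← lintegral_indicator (hs.preimage (measurable_const_add y)), ← lintegral_indicator hs,
      ← lintegral_add_left_eq_self (s.indicator fun x => f (y - x)) y]
    refine lintegral_congr fun x => ?_
    rw [← indicator_comp_right]
    simp [Function.comp_def]
  rw [withDensity_apply _ hs, conv_apply _ _ hs]
  simp_rw [hshift]
  exact (lintegral_lintegral_swap (by fun_prop)).symm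

end MeasureTheory.Measure

open Measure

instance convPow.instSFinite (μ : Measure ℝ) [SFinite μ] (n : ℕ) :
    SFinite (convPow μ n) := by
  induction n with
  | zero => rw [convPow]; infer_instance
  | succ n _ => rw [convPow]; infer_instance

theorem convPow_conv (μ ν : Measure ℝ) [SFinite μ] [SFinite ν] (n : ℕ) :
    convPow (μ ∗ ν) n = convPow μ n ∗ convPow ν n := by
  induction n with
  | zero => simp only [convPow, dirac_zero_conv]
  | succ n ih =>
    rw [convPow, convPow, convPow, ih, conv_assoc, conv_assoc,
      ← conv_assoc (convPow ν n) μ ν, conv_comm (convPow ν n) μ, conv_assoc]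

theorem ae_nonpos_conv {μ ν : Measure ℝ} (hμ : ∀ᵐ x ∂μ, x ≤ 0)
    (hν : ∀ᵐ x ∂ν, x ≤ 0) : ∀ᵐ x ∂(μ ∗ ν), x ≤ 0 := by
  rw [conv, ae_map_iff measurable_add.aemeasurable measurableSet_Iic]
  filter_upwards [quasiMeasurePreserving_fst.ae hμ, quasiMeasurePreserving_snd.ae hν]
    with p hp₁ hp₂
  exact add_nonpos hp₁ hp₂

theorem ae_nonpos_convPow {ν : Measure ℝ} (hν : ∀ᵐ x ∂ν, x ≤ 0) (n : ℕ) :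
    ∀ᵐ x ∂(convPow ν n), x ≤ 0 := by
  induction n with
  | zero => simp [convPow]
  | succ n ih => exact ae_nonpos_conv ih hν

theorem restrict_Ici_conv_eq_of_ae_nonpos {μ μ₁ ν : Measure ℝ} [SFinite μ] [SFinite μ₁]
    [SFinite ν] (h : μ.restrict (Ici 0) = μ₁.restrict (Ici 0)) (hν : ∀ᵐ x ∂ν, x ≤ 0) :
    (μ ∗ ν).restrict (Ici 0) = (μ₁ ∗ ν).restrict (Ici 0) := by
  refine (restrict_congr_meas measurableSet_Ici).2 fun s hsIci hs => ?_
  rw [conv_comm, conv_comm μ₁, conv_apply _ _ hs, conv_apply _ _ hs]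
  refine lintegral_congr_ae (hν.mono fun b hb => ?_)
  have hshift_Ici : (b + ·) ⁻¹' s ⊆ Ici 0 := fun a ha =>
    (hsIci ha).trans (add_le_of_nonpos_left hb)
  exact (restrict_congr_meas measurableSet_Ici).1 h _ hshift_Ici
    (hs.preimage (measurable_const_add b))

theorem stmt16_general
    (μ μ₁ : Measure ℝ) [IsProbabilityMeasure μ] [IsProbabilityMeasure μ₁]
    (heq : ∀ n : ℕ, 1 ≤ n → ∀ s : Set ℝ, MeasurableSet s → s ⊆ Ici 0 →
      convPow μ n s = convPow μ₁ n s)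
    (g : ℝ → ℝ) (hgmeas : Measurable g)
    (hgsupp : ∀ x < (0 : ℝ), g x = 0)
    (μbar μbar₁ : Measure ℝ)
    (hμbar : μbar = volume.withDensity
      (fun x => ∫⁻ y, ENNReal.ofReal (g (y - x)) ∂μ))
    (hμbar₁ : μbar₁ = volume.withDensity
      (fun x => ∫⁻ y, ENNReal.ofReal (g (y - x)) ∂μ₁)) :
    ∀ n : ℕ, 1 ≤ n → ∀ s : Set ℝ, MeasurableSet s → s ⊆ Ici 0 →
      convPow μbar n s = convPow μbar₁ n s := by
  intro n hn s hs hsIci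
  set ν := volume.withDensity fun x => ENNReal.ofReal (g (-x))
  have hbar (ρ : Measure ℝ) [SFinite ρ] :
      volume.withDensity (fun x => ∫⁻ y, ENNReal.ofReal (g (y - x)) ∂ρ) = ρ ∗ ν :=
    withDensity_lintegral_sub_eq_conv volume ρ (f := fun t => ENNReal.ofReal (g t))
      (by fun_prop)
  have hν : ∀ᵐ x ∂ν, x ≤ 0 := by
    refine (ae_withDensity_iff (by fun_prop)).2 (ae_of_all _ fun x hx => ?_)
    by_contra! hx_pos
    exact hx (by rw [hgsupp (-x) (by linarith), ENNReal.ofReal_zero])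
  have hpow : (convPow μ n).restrict (Ici 0) = (convPow μ₁ n).restrict (Ici 0) :=
    (restrict_congr_meas measurableSet_Ici).2 fun t ht htm => heq n hn t htm ht
  rw [hμbar, hμbar₁, hbar, hbar, convPow_conv, convPow_conv]
  exact (restrict_congr_meas measurableSet_Ici).1
    (restrict_Ici_conv_eq_of_ae_nonpos hpow (ae_nonpos_convPow hν n)) s hsIci hs

theorem stmt16
    (μ μ₁ : Measure ℝ) [IsProbabilityMeasure μ] [IsProbabilityMeasure μ₁]
    (heq : ∀ n : ℕ, 1 ≤ n → ∀ s : Set ℝ, MeasurableSet s → s ⊆ Ici 0 →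
      convPow μ n s = convPow μ₁ n s)
    (g : ℝ → ℝ) (hgmeas : Measurable g) (hgpos : ∀ x, 0 ≤ g x)
    (hgsupp : ∀ x < (0 : ℝ), g x = 0) (hgone : ∫ x, g x = 1)
    (μbar μbar₁ : Measure ℝ)
    (hμbar : μbar = volume.withDensity
      (fun x => ∫⁻ y, ENNReal.ofReal (g (y - x)) ∂μ))
    (hμbar₁ : μbar₁ = volume.withDensity
      (fun x => ∫⁻ y, ENNReal.ofReal (g (y - x)) ∂μ₁)) :
    ∀ n : ℕ, 1 ≤ n → ∀ s : Set ℝ, MeasurableSet s → s ⊆ Ici 0 →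
      convPow μbar n s = convPow μbar₁ n s :=
  stmt16_general μ μ₁ heq g hgmeas hgsupp μbar μbar₁ hμbar hμbar₁
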